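/- Let U ⊆ ℂ be open and let f : U → ℂ² be holomorphic with f'(z) ≠ 0 and f^N(z) ≠ 0 for all z ∈ U, and let f*(z) = f^N(z)/(2‖f^N(z)‖²). Fix z ∈ U with (conj∘f*)'(z) ≠ 0, set w = conj((conj∘f*)'(z)) and (f*)^N(z) = f*(z) − (⟪f*(z),w⟫/⟪w,w⟫)·w. Then (f*)^N(z) ≠ 0 and the duality map is involutive: (f*)*(z) := (f*)^N(z)/(2‖(f*)^N(z)‖²) = f(z). -/

import Mathlib

open scoped BigOperators ComplexConjugate

/-- The Hermitian inner product `⟪Z,W⟫ = Z₁·conj W₁ + Z₂·conj W₂` on `ℂ²`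
(linear in the first slot). -/
noncomputable def herm (Z W : Fin 2 → ℂ) : ℂ := ∑ j, Z j * conj (W j)

/-- The normal component of the position vector of a holomorphic curve `f : U → ℂ²`:
`f^N(z) = f(z) − (⟪f z, f' z⟫/⟪f' z, f' z⟫)·f'(z)`. -/
noncomputable def posN (f : ℂ → Fin 2 → ℂ) (z : ℂ) : Fin 2 → ℂ :=
  f z - (herm (f z) (deriv f z) / herm (deriv f z) (deriv f z)) • deriv f z

/-- The dual curve `f*(z) = f^N(z)/(2‖f^N(z)‖²)`; note `‖f^N(z)‖² = ⟪f^N z, f^N z⟫`. -/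
noncomputable def dualCurve (f : ℂ → Fin 2 → ℂ) (z : ℂ) : Fin 2 → ℂ :=
  (2 * herm (posN f z) (posN f z))⁻¹ • posN f z

/-!
Along `U` the dual curve satisfies `⟪f*, f⟫ = 1/2` and `⟪f*, f'⟫ = 0`. Differentiating the first
identity and using the second shows that `f(z)` is Hermitian-orthogonal to `w`, which spans the
tangent line of `f*` at `z`. In `ℂ²` the orthogonal complement of `w ≠ 0` is a complex line, so
`(f*)^N(z)`, being orthogonal to `w` with `⟪(f*)^N(z), f(z)⟫ = ⟪f*(z), f(z)⟫ = 1/2`, equals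
`f(z)/(2‖f(z)‖²)`; and `Z ↦ Z/(2‖Z‖²)` is an involution.
-/
lemma herm_eq_dotProduct (Z W : Fin 2 → ℂ) : herm Z W = Z ⬝ᵥ star W := rfl

open ComplexOrder in
lemma herm_self_ne_zero {Z : Fin 2 → ℂ} (hZ : Z ≠ 0) : herm Z Z ≠ 0 :=
  dotProduct_self_star_eq_zero.not.2 hZ

lemma herm_swap (Z W : Fin 2 → ℂ) : herm W Z = conj (herm Z W) :=
  Matrix.dotProduct_star W Z

lemma herm_smul_left (c : ℂ) (Z W : Fin 2 → ℂ) : herm (c • Z) W = c * herm Z W :=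
  smul_dotProduct c Z (star W)

lemma herm_smul_right (c : ℂ) (Z W : Fin 2 → ℂ) : herm Z (c • W) = conj c * herm Z W := by
  simp [herm_eq_dotProduct, star_smul, dotProduct_smul]

lemma herm_sub_left (X Z W : Fin 2 → ℂ) : herm (X - Z) W = herm X W - herm Z W :=
  sub_dotProduct X Z (star W)

lemma herm_sub_right (X Z W : Fin 2 → ℂ) : herm X (Z - W) = herm X Z - herm X W := by
  simp [herm_eq_dotProduct, star_sub, dotProduct_sub]

lemma herm_zero_left (W : Fin 2 → ℂ) : herm 0 W = 0 :=
  zero_dotProduct (star W)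

lemma HasDerivAt.herm {f g : ℂ → Fin 2 → ℂ} {f' g' : Fin 2 → ℂ} {z : ℂ}
    (hf : HasDerivAt f f' z) (hg : HasDerivAt (fun ζ j => conj (g ζ j)) g' z) :
    HasDerivAt (fun ζ => herm (f ζ) (g ζ))
      (herm f' (g z) + herm (f z) (fun j => conj (g' j))) z := by
  have := HasDerivAt.fun_sum (u := Finset.univ) fun j _ =>
    (hasDerivAt_pi.1 hf j).mul (hasDerivAt_pi.1 hg j)
  simpa [_root_.herm, Finset.sum_add_distrib] using this

lemma eq_smul_of_herm_eq_zero {P F W : Fin 2 → ℂ} (hW : W ≠ 0) (hF : F ≠ 0)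
    (hP : herm P W = 0) (hFW : herm F W = 0) : P = (herm P F / herm F F) • F := by
  simp only [herm, Fin.sum_univ_two] at hP hFW
  have hdet : P 0 * F 1 - P 1 * F 0 = 0 := by
    rw [Function.ne_iff, Fin.exists_fin_two] at hW
    rcases hW with hW | hW <;>
      refine (mul_eq_zero.1 ?_).resolve_right ((map_ne_zero (starRingEnd ℂ)).2 hW)
    · linear_combination F 1 * hP - P 1 * hFW
    · linear_combination P 0 * hFW - F 0 * hP
  have hFF := herm_self_ne_zero hF
  refine funext (Fin.forall_fin_two.2 ⟨?_, ?_⟩) <;>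
    rw [Pi.smul_apply, smul_eq_mul, div_mul_eq_mul_div, eq_div_iff hFF] <;>
    simp only [herm, Fin.sum_univ_two]
  · linear_combination conj (F 1) * hdet
  · linear_combination -conj (F 0) * hdet

noncomputable def orthComponent (Z W : Fin 2 → ℂ) : Fin 2 → ℂ :=
  Z - (herm Z W / herm W W) • W

lemma herm_orthComponent_left_self (Z : Fin 2 → ℂ) {W : Fin 2 → ℂ} (hW : W ≠ 0) :
    herm (orthComponent Z W) W = 0 := by
  rw [orthComponent, herm_sub_left, herm_smul_left, div_mul_cancel₀ _ (herm_self_ne_zero hW),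
    sub_self]

lemma herm_orthComponent_left_of_herm_eq_zero (Z : Fin 2 → ℂ) {W X : Fin 2 → ℂ}
    (h : herm W X = 0) : herm (orthComponent Z W) X = herm Z X := by
  rw [orthComponent, herm_sub_left, herm_smul_left, h, mul_zero, sub_zero]

lemma herm_orthComponent_self (Z : Fin 2 → ℂ) {W : Fin 2 → ℂ} (hW : W ≠ 0) :
    herm (orthComponent Z W) (orthComponent Z W) = herm (orthComponent Z W) Z := by
  nth_rewrite 2 [orthComponent]
  rw [herm_sub_right, herm_smul_right, herm_orthComponent_left_self Z hW, mul_zero, sub_zero]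

noncomputable def dualVec (Z : Fin 2 → ℂ) : Fin 2 → ℂ :=
  (2 * herm Z Z)⁻¹ • Z

lemma dualVec_ne_zero {Z : Fin 2 → ℂ} (hZ : Z ≠ 0) : dualVec Z ≠ 0 :=
  smul_ne_zero (inv_ne_zero (mul_ne_zero two_ne_zero (herm_self_ne_zero hZ))) hZ

lemma dualVec_dualVec (Z : Fin 2 → ℂ) : dualVec (dualVec Z) = Z := by
  rcases eq_or_ne Z 0 with rfl | hZ
  · simp [dualVec]
  have hm := herm_self_ne_zero hZ
  have hconj : conj (herm Z Z) = herm Z Z := (herm_swap Z Z).symm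
  have hdual :
      herm (dualVec Z) (dualVec Z) = (2 * herm Z Z)⁻¹ * (2 * herm Z Z)⁻¹ * herm Z Z := by
    rw [dualVec, herm_smul_left, herm_smul_right, map_inv₀, map_mul, hconj, map_ofNat, mul_assoc]
  rw [dualVec, hdual, dualVec, smul_smul]
  convert one_smul ℂ Z
  field_simp

lemma posN_eq_orthComponent (f : ℂ → Fin 2 → ℂ) (z : ℂ) :
    posN f z = orthComponent (f z) (deriv f z) := rfl

lemma dualCurve_eq_dualVec (f : ℂ → Fin 2 → ℂ) (z : ℂ) :
    dualCurve f z = dualVec (posN f z) := rfl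

lemma herm_dualCurve_deriv {f : ℂ → Fin 2 → ℂ} {z : ℂ} (hf' : deriv f z ≠ 0) :
    herm (dualCurve f z) (deriv f z) = 0 := by
  rw [dualCurve_eq_dualVec, dualVec, herm_smul_left, posN_eq_orthComponent,
    herm_orthComponent_left_self _ hf', mul_zero]

lemma herm_dualCurve_self {f : ℂ → Fin 2 → ℂ} {z : ℂ} (hf' : deriv f z ≠ 0)
    (hfN : posN f z ≠ 0) : herm (dualCurve f z) (f z) = 1 / 2 := by
  have hm := herm_self_ne_zero hfN
  rw [dualCurve_eq_dualVec, dualVec, herm_smul_left]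
  rw [posN_eq_orthComponent, herm_orthComponent_self _ hf'] at hm ⊢
  field_simp

/-- Differentiate `⟪f, f*⟫ = 1/2` and use `⟪f', f*⟫ = 0`. -/
lemma herm_conj_deriv_conj_dualCurve_eq_zero {U : Set ℂ} (hU : IsOpen U) {f : ℂ → Fin 2 → ℂ}
    (hf' : ∀ z ∈ U, deriv f z ≠ 0) (hfN : ∀ z ∈ U, posN f z ≠ 0) {z : ℂ} (hz : z ∈ U)
    (hfz : DifferentiableAt ℂ f z) {D : Fin 2 → ℂ}
    (hD : HasDerivAt (fun ζ j => conj (dualCurve f ζ j)) D z) :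
    herm (f z) (fun j => conj (D j)) = 0 := by
  have hconst : (fun ζ => herm (f ζ) (dualCurve f ζ)) =ᶠ[nhds z] fun _ => 1 / 2 := by
    filter_upwards [hU.mem_nhds hz] with ζ hζ
    rw [herm_swap, herm_dualCurve_self (hf' ζ hζ) (hfN ζ hζ), map_div₀, map_one, map_ofNat]
  have hderiv := (hfz.hasDerivAt.herm hD).unique
    ((hasDerivAt_const z (1 / 2 : ℂ)).congr_of_eventuallyEq hconst)
  rwa [herm_swap, herm_dualCurve_deriv (hf' z hz), map_zero, zero_add] at hderiv

/-- For a holomorphic curve `f : U → ℂ²` with `f' ≠ 0`, `f^N ≠ 0` on `U`, fix `z ∈ U`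
with `(conj∘f*)'(z) ≠ 0`, let `w = conj((conj∘f*)'(z))` and
`(f*)^N(z) = f*(z) − (⟪f* z, w⟫/⟪w,w⟫)·w`. Then `(f*)^N(z) ≠ 0` and the duality map is
involutive: `(f*)*(z) = (f*)^N(z)/(2‖(f*)^N(z)‖²) = f(z)`. -/
theorem dualCurve_involutive (U : Set ℂ) (hU : IsOpen U)
    (f : ℂ → Fin 2 → ℂ)
    (hf : ∀ z ∈ U, DifferentiableAt ℂ f z)
    (hf' : ∀ z ∈ U, deriv f z ≠ 0)
    (hfN : ∀ z ∈ U, posN f z ≠ 0)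
    (z : ℂ) (hz : z ∈ U)
    (w : Fin 2 → ℂ)
    (hw : w = fun j => conj (deriv (fun ζ => fun j => conj (dualCurve f ζ j)) z j))
    (hwne : deriv (fun ζ => fun j => conj (dualCurve f ζ j)) z ≠ 0)
    (fsN : Fin 2 → ℂ)
    (hfsN : fsN = dualCurve f z - (herm (dualCurve f z) w / herm w w) • w) :
    fsN ≠ 0 ∧ (2 * herm fsN fsN)⁻¹ • fsN = f z := by
  have hw0 : w ≠ 0 := hw ▸ star_ne_zero.2 hwne
  have hfw : herm (f z) w = 0 := hw ▸ herm_conj_deriv_conj_dualCurve_eq_zero hU hf' hfN hz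
    (hf z hz) (differentiableAt_of_deriv_ne_zero hwne).hasDerivAt
  have hpair : herm (dualCurve f z) (f z) = 1 / 2 := herm_dualCurve_self (hf' z hz) (hfN z hz)
  have hf0 : f z ≠ 0 := by
    rintro h
    rw [h, herm_swap, herm_zero_left] at hpair
    norm_num at hpair
  have hfsN_eq : fsN = dualVec (f z) := by
    change fsN = orthComponent _ _ at hfsN
    rw [hfsN, eq_smul_of_herm_eq_zero hw0 hf0 (herm_orthComponent_left_self _ hw0) hfw,
      herm_orthComponent_left_of_herm_eq_zero _ (by rw [herm_swap, hfw, map_zero]), hpair,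
      dualVec, div_div, one_div]
  subst hfsN_eq
  exact ⟨dualVec_ne_zero hf0, dualVec_dualVec (f z)⟩
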